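/- Fix 0 < δ < 1 and suppose Γ₂ ⊆ M_k(ℂ)^{n+2} can be covered by N unitary-orbit balls of radius ρ, and suppose for each covered point the associated 'commutation set' Ω can be covered by M balls of radius δ/4 in U(k). Formally: let Γ ⊆ M_k(ℂ)^{n+3}, let Γ₁ be its projection forgetting the last two coordinates and Γ₂ its projection forgetting the (n+1)-st coordinate; if (a) Γ₂ is covered by N unitary-orbit balls of radius ρ and (b) for every tuple in Γ, its (n+1)-st coordinate U lies within δ/4 (in ‖·‖₂) of some element of a fixed set of at most M unitaries (depending on the orbit-ball containing the projected point), and the centers can be adjusted within ρ' < δ/8, then ν(Γ₁, δ) ≤ N·M, where ν denotes the unitary-orbit covering number. -/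
import Mathlib


open Matrix MeasureTheory

/-- The normalized trace `τ_k = Tr/k` on `M_k(ℂ)`. -/
noncomputable def ntrace {k : ℕ} (A : Matrix (Fin k) (Fin k) ℂ) : ℂ :=
  Matrix.trace A / k

/-- The trace norm `‖A‖₂ = τ_k(A*A)^{1/2}` induced by the normalized trace. -/
noncomputable def nrm2 {k : ℕ} (A : Matrix (Fin k) (Fin k) ℂ) : ℝ :=
  Real.sqrt ((ntrace (Aᴴ * A)).re)

/-- `‖(A₁,…,A_n)‖₂² = Σ_j ‖A_j‖₂²` on `M_k(ℂ)ⁿ`. -/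
noncomputable def nrm2tup {k n : ℕ} (A : Fin n → Matrix (Fin k) (Fin k) ℂ) : ℝ :=
  Real.sqrt (∑ j, (nrm2 (A j)) ^ 2)

/-- `W` is a unitary `k × k` matrix. -/
def IsUnitaryM {k : ℕ} (W : Matrix (Fin k) (Fin k) ℂ) : Prop :=
  Wᴴ * W = 1 ∧ W * Wᴴ = 1

/-- The operator norm of a matrix, acting on `EuclideanSpace ℂ (Fin k)`. -/
noncomputable def opnrm {k : ℕ} (A : Matrix (Fin k) (Fin k) ℂ) : ℝ :=
  ‖Matrix.toEuclideanCLM (𝕜 := ℂ) A‖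

lemma nrm2_nonneg {k : ℕ} (A : Matrix (Fin k) (Fin k) ℂ) : 0 ≤ nrm2 A :=
  Real.sqrt_nonneg _

lemma nrm2tup_nonneg {k n : ℕ} (A : Fin n → Matrix (Fin k) (Fin k) ℂ) :
    0 ≤ nrm2tup A := Real.sqrt_nonneg _

lemma nrm2_conj {k : ℕ} (W A : Matrix (Fin k) (Fin k) ℂ) (hW : IsUnitaryM W) :
    nrm2 (W * A * Wᴴ) = nrm2 A := by
  unfold nrm2 ntrace
  have h1 : (W * A * Wᴴ)ᴴ * (W * A * Wᴴ) = W * (Aᴴ * (Wᴴ * W) * A) * Wᴴ := by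
    simp [Matrix.conjTranspose_mul, Matrix.mul_assoc]
  rw [h1, hW.1]
  have h2 : Matrix.trace (W * (Aᴴ * 1 * A) * Wᴴ) = Matrix.trace (Aᴴ * A) := by
    rw [Matrix.trace_mul_cycle, ← Matrix.mul_assoc, hW.1]
    simp
  rw [h2]
/-- combinatorial core of Lemma 4: elements of `Γ ⊆ M_k(ℂ)^{n+3}` are
written `(A, U, V, W)` with `A ∈ M_k(ℂ)ⁿ`.  If (a) the projection `Γ₂` (forgetting
the coordinate `U`) is covered by `N` unitary-orbit balls of radius `ρ` with centers
`C λ`, and (b) for every point of `Γ` and every witnessing unitary `X` for an orbit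
ball containing its projection, the conjugated coordinate `Xᴴ U X` lies within `δ/4`
of one of `M` fixed unitaries `G λ γ` (with centers adjustable within `ρ' < δ/8`),
then the projection `Γ₁` (keeping only `(A, U)`) is covered by `N·M` unitary-orbit
balls of radius `δ`, i.e. `ν(Γ₁, δ) ≤ N·M`. -/
theorem stmt10 {k n N M : ℕ} (δ ρ ρ' : ℝ) (hδ0 : 0 < δ) (hδ1 : δ < 1)
    (hρ' : ρ' < δ / 8) (hsize : ρ + δ / 4 + ρ' < δ)
    (Γ : Set ((Fin n → Matrix (Fin k) (Fin k) ℂ) ×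
      Matrix (Fin k) (Fin k) ℂ × Matrix (Fin k) (Fin k) ℂ × Matrix (Fin k) (Fin k) ℂ))
    (C : Fin N → ((Fin n → Matrix (Fin k) (Fin k) ℂ) ×
      Matrix (Fin k) (Fin k) ℂ × Matrix (Fin k) (Fin k) ℂ))
    (hcov2 : ∀ x ∈ Γ, ∃ l : Fin N, ∃ W, IsUnitaryM W ∧
      Real.sqrt (nrm2tup (fun j => x.1 j - W * (C l).1 j * Wᴴ) ^ 2
        + nrm2 (x.2.2.1 - W * (C l).2.1 * Wᴴ) ^ 2
        + nrm2 (x.2.2.2 - W * (C l).2.2 * Wᴴ) ^ 2) < ρ)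
    (G : Fin N → Fin M → Matrix (Fin k) (Fin k) ℂ)
    (hGu : ∀ l γ, IsUnitaryM (G l γ))
    (hnet : ∀ x ∈ Γ, ∀ l : Fin N, ∀ X : Matrix (Fin k) (Fin k) ℂ, IsUnitaryM X →
      Real.sqrt (nrm2tup (fun j => x.1 j - X * (C l).1 j * Xᴴ) ^ 2
        + nrm2 (x.2.2.1 - X * (C l).2.1 * Xᴴ) ^ 2
        + nrm2 (x.2.2.2 - X * (C l).2.2 * Xᴴ) ^ 2) < ρ →
      ∃ γ : Fin M, nrm2 (Xᴴ * x.2.1 * X - G l γ) ≤ δ / 4 + ρ') :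
    ∃ c : Fin N → Fin M →
        ((Fin n → Matrix (Fin k) (Fin k) ℂ) × Matrix (Fin k) (Fin k) ℂ),
      ∀ x ∈ Γ, ∃ (l : Fin N) (γ : Fin M), ∃ W, IsUnitaryM W ∧
        Real.sqrt (nrm2tup (fun j => x.1 j - W * (c l γ).1 j * Wᴴ) ^ 2
          + nrm2 (x.2.1 - W * (c l γ).2 * Wᴴ) ^ 2) < δ := by

  refine ⟨fun l γ => ((C l).1, G l γ), ?_⟩
  intro x hx
  obtain ⟨l, W, hWu, hW⟩ := hcov2 x hx
  obtain ⟨γ, hγ⟩ := hnet x hx l W hWu hW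
  refine ⟨l, γ, W, hWu, ?_⟩
  set a := nrm2tup (fun j => x.1 j - W * (C l).1 j * Wᴴ) with ha
  have ha0 : 0 ≤ a := nrm2tup_nonneg _
  have haρ : a < ρ := by
    have h2 : a ^ 2 ≤ a ^ 2 + nrm2 (x.2.2.1 - W * (C l).2.1 * Wᴴ) ^ 2
        + nrm2 (x.2.2.2 - W * (C l).2.2 * Wᴴ) ^ 2 := by
      nlinarith [sq_nonneg (nrm2 (x.2.2.1 - W * (C l).2.1 * Wᴴ)),
        sq_nonneg (nrm2 (x.2.2.2 - W * (C l).2.2 * Wᴴ))]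
    have h3 := Real.sqrt_le_sqrt h2
    rw [Real.sqrt_sq ha0] at h3
    exact lt_of_le_of_lt h3 hW
  have hkey : x.2.1 - W * G l γ * Wᴴ = W * (Wᴴ * x.2.1 * W - G l γ) * Wᴴ := by
    rw [Matrix.mul_sub, Matrix.sub_mul]
    congr 1
    rw [← Matrix.mul_assoc, ← Matrix.mul_assoc, hWu.2, Matrix.one_mul,
      Matrix.mul_assoc, hWu.2, Matrix.mul_one]
  set b := nrm2 (x.2.1 - W * G l γ * Wᴴ) with hb
  have hb0 : 0 ≤ b := nrm2_nonneg _
  have hbδ : b ≤ δ / 4 + ρ' := by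
    rw [hb, hkey, nrm2_conj _ _ hWu]; exact hγ
  have : Real.sqrt (a ^ 2 + b ^ 2) ≤ a + b := by
    have h3 : a ^ 2 + b ^ 2 ≤ (a + b) ^ 2 := by nlinarith
    calc Real.sqrt (a ^ 2 + b ^ 2) ≤ Real.sqrt ((a + b) ^ 2) := Real.sqrt_le_sqrt h3
    _ = a + b := Real.sqrt_sq (by linarith)
  calc Real.sqrt (a ^ 2 + b ^ 2) ≤ a + b := this
  _ < δ := by linarith
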